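/- Let n ≥ 4 be an even integer, μ > 0, and let p, κ be real numbers satisfying p_0(n+μ) < p < p_Fuj((n+μ-1)/2), 0 < κ ≤ (n+μ-1)p/2 − (n+μ+1)/2, and κ > 2/(p−1) − (n+μ−1)/2, and set q = (n−1)p/2 − (n+1)/2. Then there exists a constant C > 0 (depending only on n, μ, p, κ) such that for every y ≥ 0 one has ∫_{-2y}^{y} ⟨x−y⟩^{-μ(p-1)/2} ⟨x+2y⟩^{-q-1} ⟨x⟩^{-κp} dx ≤ C ⟨y⟩^{-κ}. -/
import Mathlib


open MeasureTheory Real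

/-- Japanese bracket `⟨y⟩ = 1 + |y|`. -/
noncomputable def jb (y : ℝ) : ℝ := 1 + |y|

/-- Strauss exponent: positive root of `(N-1)p² - (N+1)p - 2 = 0`. -/
noncomputable def p0 (N : ℝ) : ℝ := (N + 1 + Real.sqrt (N ^ 2 + 10 * N - 7)) / (2 * (N - 1))

/-- Fujita exponent. -/
noncomputable def pFuj (N : ℝ) : ℝ := 1 + 2 / N

lemma jb_one_le (x : ℝ) : 1 ≤ jb x := le_add_of_nonneg_right (abs_nonneg x)

lemma jb_pos (x : ℝ) : 0 < jb x := lt_of_lt_of_le one_pos (jb_one_le x)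

lemma jb_continuous : Continuous jb := continuous_const.add continuous_abs

lemma rpow_neg_anti {A B : ℝ} (hA : 0 < A) (hAB : A ≤ B) {e : ℝ} (he : 0 ≤ e) :
    B ^ (-e) ≤ A ^ (-e) := by
  rw [Real.rpow_neg hA.le, Real.rpow_neg (hA.trans_le hAB).le]
  exact inv_anti₀ (Real.rpow_pos_of_pos hA e) (Real.rpow_le_rpow hA.le hAB he)

lemma aux_int {e : ℝ} (he0 : 0 ≤ e) (he1 : e < 1) {T : ℝ} (hT : 1 ≤ T) :
    ∫ u in (1:ℝ)..T, u ^ (-e) ≤ T ^ (1 - e) / (1 - e) := by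
  rw [integral_rpow (Or.inl (by linarith)), Real.one_rpow,
    show -e + 1 = 1 - e by ring]
  have h1 : (0:ℝ) < 1 - e := by linarith
  gcongr
  linarith

lemma half_rpow {t e : ℝ} (ht : 0 < t) : (t / 2) ^ (-e) = 2 ^ e * t ^ (-e) := by
  rw [Real.div_rpow ht.le (by norm_num), Real.rpow_neg (by norm_num : (0:ℝ) ≤ 2),
    div_eq_mul_inv, inv_inv, mul_comm]

lemma mul3_le {x1 x2 x3 y1 y2 y3 : ℝ} (h1 : x1 ≤ y1) (h2 : x2 ≤ y2) (h3 : x3 ≤ y3)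
    (hx2 : 0 ≤ x2) (hx3 : 0 ≤ x3) (hy1 : 0 ≤ y1) (hy2 : 0 ≤ y2) :
    x1 * x2 * x3 ≤ y1 * y2 * y3 :=
  mul_le_mul (mul_le_mul h1 h2 hx2 hy1) h3 hx3 (mul_nonneg hy1 hy2)

set_option maxHeartbeats 1000000 in
/-- Lemma 3.7:
`∫_{-2y}^{y} ⟨x-y⟩^{-μ(p-1)/2} ⟨x+2y⟩^{-q-1} ⟨x⟩^{-κp} dx ≲ ⟨y⟩^{-κ}`. -/
theorem lemma_third_integral (n : ℕ) (hn : 4 ≤ n) (hne : Even n)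
    (μ : ℝ) (hμ : 0 < μ) (p κ q : ℝ)
    (hp₁ : p0 ((n : ℝ) + μ) < p) (hp₂ : p < pFuj (((n : ℝ) + μ - 1) / 2))
    (hκ₁ : 0 < κ) (hκ₂ : κ ≤ ((n : ℝ) + μ - 1) * p / 2 - ((n : ℝ) + μ + 1) / 2)
    (hκ₃ : κ > 2 / (p - 1) - ((n : ℝ) + μ - 1) / 2)
    (hq : q = ((n : ℝ) - 1) * p / 2 - ((n : ℝ) + 1) / 2) :
    ∃ C > 0, ∀ y : ℝ, 0 ≤ y →
      (∫ x in (-2 * y)..y,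
          jb (x - y) ^ (-(μ * (p - 1) / 2)) * jb (x + 2 * y) ^ (-q - 1) *
            jb x ^ (-(κ * p))) ≤
        C * jb y ^ (-κ) := by
  have hn4 : (4:ℝ) ≤ (n:ℝ) := by exact_mod_cast hn
  have hN4 : (4:ℝ) ≤ (n:ℝ) + μ := by linarith
  have hsq : (n:ℝ) + μ - 1 ≤ Real.sqrt (((n:ℝ)+μ)^2 + 10*((n:ℝ)+μ) - 7) := by
    have h1 : ((n:ℝ)+μ-1)^2 ≤ ((n:ℝ)+μ)^2 + 10*((n:ℝ)+μ) - 7 := by nlinarith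
    have h2 := Real.sqrt_le_sqrt h1
    rwa [Real.sqrt_sq (by linarith)] at h2
  have hp1 : 1 < p := by
    have h0 : 1 < p0 ((n:ℝ)+μ) := by
      unfold p0
      rw [lt_div_iff₀ (by linarith)]
      linarith
    linarith
  have hpp : 0 < p - 1 := by linarith
  set a := μ * (p - 1) / 2 with ha_def
  set c := κ * p with hc_def
  set b := ((n:ℝ) - 1) * (p - 1) / 2 with hb_def
  have ha : 0 < a := by rw [ha_def]; exact div_pos (mul_pos hμ hpp) two_pos
  have hb : 0 < b := by
    rw [hb_def]
    exact div_pos (mul_pos (by linarith) hpp) two_pos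
  have hc : 0 < c := by rw [hc_def]; exact mul_pos hκ₁ (by linarith)
  have hkp1 : 0 < κ * (p - 1) := mul_pos hκ₁ hpp
  have hkpc : κ * (p - 1) = c - κ := by rw [hc_def]; ring
  have hab : κ + 1 ≤ a + b := by
    rw [ha_def, hb_def]; push_cast; linarith
  have habk : 2 < a + b + κ * (p - 1) := by
    have h1 : 2 / (p-1) < κ + ((n:ℝ)+μ-1)/2 := by linarith
    have h2 : 2 < (κ + ((n:ℝ)+μ-1)/2) * (p-1) := (div_lt_iff₀ hpp).mp h1
    rw [ha_def, hb_def]; nlinarith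
  set e₁ := min b (1 - min a 1 / 2) with he₁_def
  set e₃ := min a (1 - min b 1 / 2) with he₃_def
  have hma : 0 < min a 1 := lt_min ha one_pos
  have hma1 : min a 1 ≤ 1 := min_le_right _ _
  have hmb : 0 < min b 1 := lt_min hb one_pos
  have hmb1 : min b 1 ≤ 1 := min_le_right _ _
  have he₁0 : 0 ≤ e₁ := le_min hb.le (by linarith)
  have he₁1 : e₁ < 1 := lt_of_le_of_lt (min_le_right _ _) (by linarith)
  have he₁b : e₁ ≤ b := min_le_left _ _
  have he₁big : 1 ≤ a + e₁ + κ * (p - 1) := by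
    rcases min_cases b (1 - min a 1 / 2) with ⟨h, _⟩ | ⟨h, _⟩ <;>
      rw [he₁_def, h]
    · linarith
    · have := min_le_left a 1
      linarith
  have he₃0 : 0 ≤ e₃ := le_min ha.le (by linarith)
  have he₃1 : e₃ < 1 := lt_of_le_of_lt (min_le_right _ _) (by linarith)
  have he₃a : e₃ ≤ a := min_le_left _ _
  have he₃big : 1 ≤ b + e₃ + κ * (p - 1) := by
    rcases min_cases a (1 - min b 1 / 2) with ⟨h, _⟩ | ⟨h, _⟩ <;>
      rw [he₃_def, h]
    · linarith
    · have := min_le_left b 1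
      linarith
  set C1 := 1 / (1 - e₁) with hC1_def
  set C2 := (3/2) * (2:ℝ) ^ a with hC2_def
  set C3 := (2:ℝ) ^ c / (1 - e₃) with hC3_def
  have hC1 : 0 < C1 := div_pos one_pos (by linarith)
  have hC2 : 0 < C2 := mul_pos (by norm_num) (Real.rpow_pos_of_pos two_pos a)
  have hC3 : 0 < C3 := div_pos (Real.rpow_pos_of_pos two_pos c) (by linarith)
  refine ⟨C1 + C2 + C3, by linarith, ?_⟩
  intro y hy
  have h0y : (0:ℝ) < 1 + y := by linarith
  have h1y : (1:ℝ) ≤ 1 + y := by linarith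
  have hjby : jb y ^ (-κ) = (1+y) ^ (-κ) := by rw [jb, abs_of_nonneg hy]
  rw [hjby]
  have hqb : -q - 1 = -b := by rw [hq, hb_def]; ring
  simp only [hqb]
  have hFc : Continuous (fun x : ℝ =>
      jb (x - y) ^ (-a) * jb (x + 2 * y) ^ (-b) * jb x ^ (-c)) := by
    refine Continuous.mul (Continuous.mul ?_ ?_) ?_
    · exact (jb_continuous.comp (continuous_id.sub continuous_const)).rpow_const
        (fun x => Or.inl (jb_pos _).ne')
    · exact (jb_continuous.comp (continuous_id.add continuous_const)).rpow_const
        (fun x => Or.inl (jb_pos _).ne')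
    · exact jb_continuous.rpow_const (fun x => Or.inl (jb_pos _).ne')
  have hii : ∀ u v : ℝ, IntervalIntegrable
      (fun x : ℝ => jb (x - y) ^ (-a) * jb (x + 2 * y) ^ (-b) * jb x ^ (-c))
      volume u v := fun u v => hFc.intervalIntegrable u v
  rw [← intervalIntegral.integral_add_adjacent_intervals (hii (-2*y) (y/2)) (hii (y/2) y),
      ← intervalIntegral.integral_add_adjacent_intervals (hii (-2*y) (-y)) (hii (-y) (y/2))]
  -- Piece 1 : over [-2y, -y]
  have key1 : (∫ x in (-2*y)..(-y),
      jb (x - y) ^ (-a) * jb (x + 2 * y) ^ (-b) * jb x ^ (-c)) ≤ C1 * (1+y) ^ (-κ) := by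
    have hle : ∀ x ∈ Set.Icc (-2*y) (-y),
        jb (x - y) ^ (-a) * jb (x + 2 * y) ^ (-b) * jb x ^ (-c) ≤
          (1+y) ^ (-(a+c)) * (x + (2*y+1)) ^ (-e₁) := by
      intro x hx
      obtain ⟨hx1, hx2⟩ := hx
      have hb1 : 1 + y ≤ jb (x - y) := by
        simp only [jb]; have := neg_abs_le (x - y); linarith
      have hb3 : 1 + y ≤ jb x := by
        simp only [jb]; have := neg_abs_le x; linarith
      have hb2 : jb (x + 2*y) = x + (2*y+1) := by
        simp only [jb]; rw [abs_of_nonneg (by linarith)]; ring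
      have t1 : jb (x - y) ^ (-a) ≤ (1+y) ^ (-a) := rpow_neg_anti h0y hb1 ha.le
      have t2 : jb (x + 2*y) ^ (-b) ≤ (x + (2*y+1)) ^ (-e₁) := by
        rw [hb2]
        exact Real.rpow_le_rpow_of_exponent_le (by linarith) (by linarith)
      have t3 : jb x ^ (-c) ≤ (1+y) ^ (-c) := rpow_neg_anti h0y hb3 hc.le
      calc jb (x - y) ^ (-a) * jb (x + 2 * y) ^ (-b) * jb x ^ (-c)
          ≤ (1+y) ^ (-a) * (x + (2*y+1)) ^ (-e₁) * (1+y) ^ (-c) :=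
            mul3_le t1 t2 t3 (Real.rpow_nonneg (jb_pos _).le _)
              (Real.rpow_nonneg (jb_pos _).le _) (Real.rpow_nonneg h0y.le _)
              (Real.rpow_nonneg (by linarith) _)
        _ = (1+y) ^ (-(a+c)) * (x + (2*y+1)) ^ (-e₁) := by
            rw [show (-(a+c)) = (-a) + (-c) by ring, Real.rpow_add h0y]; ring
    have hgi : IntervalIntegrable
        (fun x : ℝ => (1+y) ^ (-(a+c)) * (x + (2*y+1)) ^ (-e₁)) volume (-2*y) (-y) := by
      apply ContinuousOn.intervalIntegrable
      apply ContinuousOn.mul continuousOn_const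
      apply ContinuousOn.rpow_const (continuous_id.add continuous_const).continuousOn
      intro x hx
      rw [Set.uIcc_of_le (by linarith : -2*y ≤ -y)] at hx
      have h1 : 0 < x + (2*y+1) := by have := hx.1; linarith
      exact Or.inl h1.ne'
    calc (∫ x in (-2*y)..(-y), jb (x - y) ^ (-a) * jb (x + 2 * y) ^ (-b) * jb x ^ (-c))
        ≤ ∫ x in (-2*y)..(-y), (1+y) ^ (-(a+c)) * (x + (2*y+1)) ^ (-e₁) :=
          intervalIntegral.integral_mono_on (by linarith) (hii _ _) hgi hle
      _ = (1+y) ^ (-(a+c)) * ∫ x in (-2*y)..(-y), (x + (2*y+1)) ^ (-e₁) :=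
          intervalIntegral.integral_const_mul _ _
      _ = (1+y) ^ (-(a+c)) * ∫ u in (1:ℝ)..(1+y), u ^ (-e₁) := by
          rw [intervalIntegral.integral_comp_add_right (fun u : ℝ => u ^ (-e₁)) (2*y+1),
            show -2*y + (2*y+1) = (1:ℝ) by ring, show -y + (2*y+1) = 1+y by ring]
      _ ≤ (1+y) ^ (-(a+c)) * ((1+y) ^ (1-e₁) / (1-e₁)) :=
          mul_le_mul_of_nonneg_left (aux_int he₁0 he₁1 h1y) (Real.rpow_nonneg h0y.le _)
      _ = C1 * ((1+y) ^ (-(a+c)) * (1+y) ^ (1-e₁)) := by rw [hC1_def]; ring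
      _ = C1 * (1+y) ^ (-(a+c) + (1-e₁)) := by rw [Real.rpow_add h0y]
      _ ≤ C1 * (1+y) ^ (-κ) := by
          apply mul_le_mul_of_nonneg_left _ hC1.le
          exact Real.rpow_le_rpow_of_exponent_le h1y (by linarith)
  -- Piece 2 : over [-y, y/2]
  have key2 : (∫ x in (-y)..(y/2),
      jb (x - y) ^ (-a) * jb (x + 2 * y) ^ (-b) * jb x ^ (-c)) ≤ C2 * (1+y) ^ (-κ) := by
    have hle : ∀ x ∈ Set.Icc (-y) (y/2),
        jb (x - y) ^ (-a) * jb (x + 2 * y) ^ (-b) * jb x ^ (-c) ≤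
          (2:ℝ) ^ a * (1+y) ^ (-(κ+1)) := by
      intro x hx
      obtain ⟨hx1, hx2⟩ := hx
      have hb1 : (1+y)/2 ≤ jb (x - y) := by
        simp only [jb]; have := neg_abs_le (x - y); linarith
      have hb2 : 1 + y ≤ jb (x + 2*y) := by
        simp only [jb]; have := le_abs_self (x + 2*y); linarith
      have t1 : jb (x - y) ^ (-a) ≤ ((1+y)/2) ^ (-a) :=
        rpow_neg_anti (by linarith) hb1 ha.le
      have t2 : jb (x + 2*y) ^ (-b) ≤ (1+y) ^ (-b) := rpow_neg_anti h0y hb2 hb.le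
      have t3 : jb x ^ (-c) ≤ 1 :=
        Real.rpow_le_one_of_one_le_of_nonpos (jb_one_le x) (by linarith)
      calc jb (x - y) ^ (-a) * jb (x + 2 * y) ^ (-b) * jb x ^ (-c)
          ≤ ((1+y)/2) ^ (-a) * (1+y) ^ (-b) * 1 :=
            mul3_le t1 t2 t3 (Real.rpow_nonneg (jb_pos _).le _)
              (Real.rpow_nonneg (jb_pos _).le _) (Real.rpow_nonneg (by linarith) _)
              (Real.rpow_nonneg h0y.le _)
        _ = (2:ℝ) ^ a * ((1+y) ^ (-a) * (1+y) ^ (-b)) := by rw [half_rpow h0y]; ring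
        _ = (2:ℝ) ^ a * (1+y) ^ (-a + -b) := by rw [Real.rpow_add h0y]
        _ ≤ (2:ℝ) ^ a * (1+y) ^ (-(κ+1)) := by
            apply mul_le_mul_of_nonneg_left _ (Real.rpow_nonneg (by norm_num) _)
            exact Real.rpow_le_rpow_of_exponent_le h1y (by linarith)
    have hz : (0:ℝ) ≤ (1+y) ^ (-(κ+1)) := Real.rpow_nonneg h0y.le _
    have h2a : (0:ℝ) ≤ (2:ℝ) ^ a := Real.rpow_nonneg (by norm_num) _
    have hstep : (1+y) ^ (-(κ+1)) * (1+y) = (1+y) ^ (-κ) := by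
      rw [← Real.rpow_add_one h0y.ne' (-(κ+1)), show -(κ+1) + 1 = -κ by ring]
    calc (∫ x in (-y)..(y/2), jb (x - y) ^ (-a) * jb (x + 2 * y) ^ (-b) * jb x ^ (-c))
        ≤ ∫ _x in (-y)..(y/2), (2:ℝ) ^ a * (1+y) ^ (-(κ+1)) :=
          intervalIntegral.integral_mono_on (by linarith) (hii _ _)
            intervalIntegrable_const hle
      _ = (y/2 - -y) * ((2:ℝ) ^ a * (1+y) ^ (-(κ+1))) := by
          rw [intervalIntegral.integral_const, smul_eq_mul]
      _ = ((2:ℝ) ^ a * (1+y) ^ (-(κ+1))) * (3/2*y) := by ring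
      _ ≤ ((2:ℝ) ^ a * (1+y) ^ (-(κ+1))) * (3/2*(1+y)) :=
          mul_le_mul_of_nonneg_left (by linarith) (mul_nonneg h2a hz)
      _ = C2 * ((1+y) ^ (-(κ+1)) * (1+y)) := by rw [hC2_def]; ring
      _ = C2 * (1+y) ^ (-κ) := by rw [hstep]
  -- Piece 3 : over [y/2, y]
  have key3 : (∫ x in (y/2)..y,
      jb (x - y) ^ (-a) * jb (x + 2 * y) ^ (-b) * jb x ^ (-c)) ≤ C3 * (1+y) ^ (-κ) := by
    have hle : ∀ x ∈ Set.Icc (y/2) y,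
        jb (x - y) ^ (-a) * jb (x + 2 * y) ^ (-b) * jb x ^ (-c) ≤
          ((2:ℝ) ^ c * (1+y) ^ (-(b+c))) * ((y+1) - x) ^ (-e₃) := by
      intro x hx
      obtain ⟨hx1, hx2⟩ := hx
      have hb1 : jb (x - y) = (y+1) - x := by
        simp only [jb]; rw [abs_of_nonpos (by linarith : x - y ≤ 0)]; ring
      have hb2 : 1 + y ≤ jb (x + 2*y) := by
        simp only [jb]; have := le_abs_self (x + 2*y); linarith
      have hb3 : (1+y)/2 ≤ jb x := by
        simp only [jb]; have := le_abs_self x; linarith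
      have t1 : jb (x - y) ^ (-a) ≤ ((y+1) - x) ^ (-e₃) := by
        rw [hb1]
        exact Real.rpow_le_rpow_of_exponent_le (by linarith) (by linarith)
      have t2 : jb (x + 2*y) ^ (-b) ≤ (1+y) ^ (-b) := rpow_neg_anti h0y hb2 hb.le
      have t3 : jb x ^ (-c) ≤ ((1+y)/2) ^ (-c) :=
        rpow_neg_anti (by linarith) hb3 hc.le
      calc jb (x - y) ^ (-a) * jb (x + 2 * y) ^ (-b) * jb x ^ (-c)
          ≤ ((y+1) - x) ^ (-e₃) * (1+y) ^ (-b) * ((1+y)/2) ^ (-c) :=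
            mul3_le t1 t2 t3 (Real.rpow_nonneg (jb_pos _).le _)
              (Real.rpow_nonneg (jb_pos _).le _) (Real.rpow_nonneg (by linarith) _)
              (Real.rpow_nonneg h0y.le _)
        _ = ((2:ℝ) ^ c * ((1+y) ^ (-b) * (1+y) ^ (-c))) * ((y+1) - x) ^ (-e₃) := by
            rw [half_rpow h0y]; ring
        _ = ((2:ℝ) ^ c * (1+y) ^ (-(b+c))) * ((y+1) - x) ^ (-e₃) := by
            rw [show (-(b+c)) = (-b) + (-c) by ring, Real.rpow_add h0y]
    have hgi : IntervalIntegrable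
        (fun x : ℝ => ((2:ℝ) ^ c * (1+y) ^ (-(b+c))) * ((y+1) - x) ^ (-e₃))
        volume (y/2) y := by
      apply ContinuousOn.intervalIntegrable
      apply ContinuousOn.mul continuousOn_const
      apply ContinuousOn.rpow_const (continuous_const.sub continuous_id).continuousOn
      intro x hx
      rw [Set.uIcc_of_le (by linarith : y/2 ≤ y)] at hx
      have h1 : 0 < (y+1) - x := by have := hx.2; linarith
      exact Or.inl h1.ne'
    have hD : (0:ℝ) ≤ (2:ℝ) ^ c * (1+y) ^ (-(b+c)) :=
      mul_nonneg (Real.rpow_nonneg (by norm_num) _) (Real.rpow_nonneg h0y.le _)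
    calc (∫ x in (y/2)..y, jb (x - y) ^ (-a) * jb (x + 2 * y) ^ (-b) * jb x ^ (-c))
        ≤ ∫ x in (y/2)..y, ((2:ℝ) ^ c * (1+y) ^ (-(b+c))) * ((y+1) - x) ^ (-e₃) :=
          intervalIntegral.integral_mono_on (by linarith) (hii _ _) hgi hle
      _ = ((2:ℝ) ^ c * (1+y) ^ (-(b+c))) * ∫ x in (y/2)..y, ((y+1) - x) ^ (-e₃) :=
          intervalIntegral.integral_const_mul _ _
      _ = ((2:ℝ) ^ c * (1+y) ^ (-(b+c))) * ∫ u in (1:ℝ)..(1+y/2), u ^ (-e₃) := by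
          rw [intervalIntegral.integral_comp_sub_left (fun u : ℝ => u ^ (-e₃)) (y+1),
            show (y+1) - y = (1:ℝ) by ring, show (y+1) - y/2 = 1+y/2 by ring]
      _ ≤ ((2:ℝ) ^ c * (1+y) ^ (-(b+c))) * ((1+y/2) ^ (1-e₃) / (1-e₃)) :=
          mul_le_mul_of_nonneg_left (aux_int he₃0 he₃1 (by linarith)) hD
      _ ≤ ((2:ℝ) ^ c * (1+y) ^ (-(b+c))) * ((1+y) ^ (1-e₃) / (1-e₃)) := by
          apply mul_le_mul_of_nonneg_left _ hD
          have := Real.rpow_le_rpow (by linarith : (0:ℝ) ≤ 1+y/2)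
            (by linarith : 1+y/2 ≤ 1+y) (by linarith : (0:ℝ) ≤ 1-e₃)
          gcongr
      _ = C3 * ((1+y) ^ (-(b+c)) * (1+y) ^ (1-e₃)) := by rw [hC3_def]; ring
      _ = C3 * (1+y) ^ (-(b+c) + (1-e₃)) := by rw [Real.rpow_add h0y]
      _ ≤ C3 * (1+y) ^ (-κ) := by
          apply mul_le_mul_of_nonneg_left _ hC3.le
          exact Real.rpow_le_rpow_of_exponent_le h1y (by linarith)
  calc (∫ x in (-2*y)..(-y), jb (x - y) ^ (-a) * jb (x + 2 * y) ^ (-b) * jb x ^ (-c))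
      + (∫ x in (-y)..(y/2), jb (x - y) ^ (-a) * jb (x + 2 * y) ^ (-b) * jb x ^ (-c))
      + (∫ x in (y/2)..y, jb (x - y) ^ (-a) * jb (x + 2 * y) ^ (-b) * jb x ^ (-c))
      ≤ C1 * (1+y) ^ (-κ) + C2 * (1+y) ^ (-κ) + C3 * (1+y) ^ (-κ) :=
        add_le_add (add_le_add key1 key2) key3
    _ = (C1 + C2 + C3) * (1+y) ^ (-κ) := by ring
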